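/- Let q ∈ [1,∞), δ > 0, and let λ* be a minimizer over λ ≥ 0 of the dual objective Φ(λ) = λδ^q + E_{P₀}[1_{X⁻}(X)(1 − p₀λ d₊(X)^q)₊] + E_{P₁}[1_{X⁺}(X)(1 − p₁λ d₋(X)^q)₊] associated with the worst-case fairness problem. Then λ* ≤ 2 max(1/p₀, 1/p₁) / δ^q. -/

import Mathlib

/-! The hinge terms of `Φ` take values in `[0, 1]` and are integrated against conditional laws
of total mass at most one. Hence `λ δ^q ≤ Φ(λ)`, while `Φ(0) ≤ 2`, so minimality of `λ` gives
`λ δ^q ≤ 2 ≤ 2 / p₀`. -/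

open MeasureTheory ProbabilityTheory Filter
open scoped ENNReal

noncomputable section

variable {𝒳 𝒜 : Type*} [MeasurableSpace 𝒳] [MetricSpace 𝒳]
  [MeasurableSpace 𝒜] [DecidableEq 𝒜]

/-- Ground cost on `Z = 𝒳 × 𝒜 × Bool`: the feature distance if the labels agree,
`∞` otherwise. -/
def cost (z z' : 𝒳 × 𝒜 × Bool) : ℝ≥0∞ :=
  if z.2 = z'.2 then ENNReal.ofReal (dist z.1 z'.1) else ⊤

/-- `π` is a coupling of `P` and `Q`. -/
def IsCoupling (π : Measure ((𝒳 × 𝒜 × Bool) × (𝒳 × 𝒜 × Bool)))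
    (P Q : Measure (𝒳 × 𝒜 × Bool)) : Prop :=
  π.map Prod.fst = P ∧ π.map Prod.snd = Q

/-- The `q`-Wasserstein distance between measures on `Z`, with ground cost `cost`. -/
def wassersteinQ (q : ℝ) (P Q : Measure (𝒳 × 𝒜 × Bool)) : ℝ≥0∞ :=
  ⨅ (π : Measure ((𝒳 × 𝒜 × Bool) × (𝒳 × 𝒜 × Bool))) (_ : IsCoupling π P Q),
    (∫⁻ p, cost p.1 p.2 ^ q ∂π) ^ (1 / q)

/-- The Wasserstein ball of radius `δ` around `P`. -/
def wBall (q δ : ℝ) (P : Measure (𝒳 × 𝒜 × Bool)) :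
    Set (Measure (𝒳 × 𝒜 × Bool)) :=
  {Q | IsProbabilityMeasure Q ∧ wassersteinQ q P Q ≤ ENNReal.ofReal δ}

/-- The `∞`-Wasserstein distance between measures on `Z`. -/
def wassersteinInf (P Q : Measure (𝒳 × 𝒜 × Bool)) : ℝ≥0∞ :=
  ⨅ (π : Measure ((𝒳 × 𝒜 × Bool) × (𝒳 × 𝒜 × Bool))) (_ : IsCoupling π P Q),
    essSup (fun p => cost p.1 p.2) π

/-- The `∞`-Wasserstein ball of radius `δ` around `P`. -/
def wBallInf (δ : ℝ) (P : Measure (𝒳 × 𝒜 × Bool)) :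
    Set (Measure (𝒳 × 𝒜 × Bool)) :=
  {Q | IsProbabilityMeasure Q ∧ wassersteinInf P Q ≤ ENNReal.ofReal δ}

/-- The conditional law of `X` given `(A,Y) ∈ S`. -/
def condLawX (P : Measure (𝒳 × 𝒜 × Bool)) (S : Set (𝒜 × Bool)) : Measure 𝒳 :=
  (P[|{z | z.2 ∈ S}]).map Prod.fst

/-- Positive decision region `X⁺ = {x : g x ≥ 0}`. -/
def Xplus (g : 𝒳 → ℝ) : Set 𝒳 := {x | 0 ≤ g x}

/-- Negative decision region `X⁻ = {x : g x < 0}`. -/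
def Xminus (g : 𝒳 → ℝ) : Set 𝒳 := {x | g x < 0}

/-- Distance to the positive region. -/
def dplus (g : 𝒳 → ℝ) (x : 𝒳) : ℝ := Metric.infDist x (Xplus g)

/-- Distance to the negative region. -/
def dminus (g : 𝒳 → ℝ) (x : 𝒳) : ℝ := Metric.infDist x (Xminus g)

/-- The classifier `h_θ = 1{g_θ ≥ 0}` as a real-valued function. -/
def hcls (g : 𝒳 → ℝ) (x : 𝒳) : ℝ := if 0 ≤ g x then 1 else 0

/-- The fairness score `f(z) = h(x) (1_{S₀}(a,y)/p₀ − 1_{S₁}(a,y)/p₁)`. -/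
def fScore (g : 𝒳 → ℝ) (S0 S1 : Set (𝒜 × Bool)) (p0 p1 : ℝ)
    (z : 𝒳 × 𝒜 × Bool) : ℝ :=
  hcls g z.1 * (S0.indicator (fun _ => (1:ℝ)) z.2 / p0
    - S1.indicator (fun _ => (1:ℝ)) z.2 / p1)

/-- Conditional distribution of the distance to the decision boundary:
`G(s) = μ(dd(X) ≤ s ∣ dd(X) > 0)`. -/
def Gdist (μ : Measure 𝒳) (dd : 𝒳 → ℝ) (s : ℝ) : ℝ :=
  ((μ[|{x | 0 < dd x}]) {x | dd x ≤ s}).toReal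

/-- Upward Wasserstein regularizer (finite `q`). -/
def Sreg (q δ : ℝ) (P : Measure (𝒳 × 𝒜 × Bool)) (f : 𝒳 × 𝒜 × Bool → ℝ) : ℝ :=
  sSup ((fun Q => ∫ z, f z ∂Q) '' wBall q δ P) - ∫ z, f z ∂P

/-- Downward Wasserstein regularizer (finite `q`). -/
def Ireg (q δ : ℝ) (P : Measure (𝒳 × 𝒜 × Bool)) (f : 𝒳 × 𝒜 × Bool → ℝ) : ℝ :=
  ∫ z, f z ∂P - sInf ((fun Q => ∫ z, f z ∂Q) '' wBall q δ P)

/-- Upward Wasserstein regularizer (`q = ∞`). -/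
def SregInf (δ : ℝ) (P : Measure (𝒳 × 𝒜 × Bool)) (f : 𝒳 × 𝒜 × Bool → ℝ) : ℝ :=
  sSup ((fun Q => ∫ z, f z ∂Q) '' wBallInf δ P) - ∫ z, f z ∂P

/-- Downward Wasserstein regularizer (`q = ∞`). -/
def IregInf (δ : ℝ) (P : Measure (𝒳 × 𝒜 × Bool)) (f : 𝒳 × 𝒜 × Bool → ℝ) : ℝ :=
  ∫ z, f z ∂P - sInf ((fun Q => ∫ z, f z ∂Q) '' wBallInf δ P)

lemma integral_le_one_of_le_one {α : Type*} [MeasurableSpace α] (μ : Measure α)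
    [IsZeroOrProbabilityMeasure μ] {f : α → ℝ} (hf : ∀ x, f x ≤ 1) :
    ∫ x, f x ∂μ ≤ 1 := by
  by_cases hfi : Integrable f μ
  · calc ∫ x, f x ∂μ ≤ ∫ _, (1 : ℝ) ∂μ := integral_mono hfi (integrable_const 1) hf
      _ = μ.real Set.univ := by simp
      _ ≤ 1 := measureReal_le_one
  · simp [integral_undef hfi]

instance condLawX.isZeroOrProbabilityMeasure (P : Measure (𝒳 × 𝒜 × Bool))
    (S : Set (𝒜 × Bool)) : IsZeroOrProbabilityMeasure (condLawX P S) := by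
  unfold condLawX
  infer_instance

theorem dual_optimizer_bound_general
    (P : Measure (𝒳 × 𝒜 × Bool)) [IsProbabilityMeasure P]
    (g : 𝒳 → ℝ)
    (S0 S1 : Set (𝒜 × Bool))
    (p0 p1 : ℝ)
    (hp0 : p0 = (P {z | z.2 ∈ S0}).toReal)
    (hp0pos : 0 < p0)
    (q δ : ℝ) (hδ : 0 < δ)
    (Phi : ℝ → ℝ)
    (hPhi : ∀ lam, Phi lam = lam * δ ^ q
        + (∫ x, (Xminus g).indicator
            (fun x' => max (1 - p0 * lam * dplus g x' ^ q) 0) x ∂condLawX P S0)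
        + ∫ x, (Xplus g).indicator
            (fun x' => max (1 - p1 * lam * dminus g x' ^ q) 0) x ∂condLawX P S1)
    (lam : ℝ)
    (hmin : ∀ μ : ℝ, 0 ≤ μ → Phi lam ≤ Phi μ) :
    lam ≤ 2 * max (1 / p0) (1 / p1) / δ ^ q := by
  have hinge_nonneg {s : Set 𝒳} {φ : 𝒳 → ℝ} : 0 ≤ s.indicator (fun x' => max (φ x') 0) :=
    Set.indicator_nonneg fun _ _ => le_max_right _ _
  have hinge_le_one {s : Set 𝒳} {c : ℝ} {d : 𝒳 → ℝ} (x : 𝒳) :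
      s.indicator (fun x' => max (1 - c * 0 * d x') 0) x ≤ 1 :=
    Set.indicator_apply_le' (fun _ => by simp) (fun _ => zero_le_one)
  have lower : lam * δ ^ q ≤ Phi lam := by
    rw [hPhi]
    exact le_add_of_le_of_nonneg (le_add_of_nonneg_right (integral_nonneg hinge_nonneg))
      (integral_nonneg hinge_nonneg)
  have upper : Phi 0 ≤ 2 := by
    rw [hPhi, zero_mul, zero_add, ← one_add_one_eq_two]
    exact add_le_add (integral_le_one_of_le_one _ hinge_le_one)
      (integral_le_one_of_le_one _ hinge_le_one)
  have one_le_max : 1 ≤ max (1 / p0) (1 / p1) :=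
    le_max_of_le_left (one_le_one_div hp0pos (hp0 ▸ measureReal_le_one))
  rw [le_div_iff₀ (Real.rpow_pos_of_pos hδ q)]
  calc lam * δ ^ q ≤ 2 := lower.trans ((hmin 0 le_rfl).trans upper)
    _ ≤ 2 * max (1 / p0) (1 / p1) := by linarith

/-- upper bound on the optimal dual multiplier. -/
theorem dual_optimizer_bound
    (P : Measure (𝒳 × 𝒜 × Bool)) [IsProbabilityMeasure P]
    (g : 𝒳 → ℝ)
    (S0 S1 : Set (𝒜 × Bool)) (hdisj : Disjoint S0 S1)
    (p0 p1 : ℝ)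
    (hp0 : p0 = (P {z | z.2 ∈ S0}).toReal) (hp1 : p1 = (P {z | z.2 ∈ S1}).toReal)
    (hp0pos : 0 < p0) (hp1pos : 0 < p1)
    (q δ : ℝ) (hq : 1 ≤ q) (hδ : 0 < δ)
    (Phi : ℝ → ℝ)
    (hPhi : ∀ lam, Phi lam = lam * δ ^ q
        + (∫ x, (Xminus g).indicator
            (fun x' => max (1 - p0 * lam * dplus g x' ^ q) 0) x ∂condLawX P S0)
        + ∫ x, (Xplus g).indicator
            (fun x' => max (1 - p1 * lam * dminus g x' ^ q) 0) x ∂condLawX P S1)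
    (lam : ℝ) (hlam : 0 ≤ lam)
    (hmin : ∀ μ : ℝ, 0 ≤ μ → Phi lam ≤ Phi μ) :
    lam ≤ 2 * max (1 / p0) (1 / p1) / δ ^ q :=
  dual_optimizer_bound_general P g S0 S1 p0 p1 hp0 hp0pos q δ hδ Phi hPhi lam hmin
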